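/- arXiv:2509.15698 — 5 statements merged into one kernel-verified Lean document; each statement's English description precedes it below -/
import Mathlib

section
/- Let d, m be positive integers, b : ℝ^d → ℝ^d, σ : ℝ^d → ℝ^(d×m), and g : ℝ^d → ℝ (representing x ↦ ∫_Z |γ(x,z)|² ν(dz)) with g ≥ 0. Assume the coercivity condition: for all x, 2⟨x, b(x)⟩ + ‖σ(x)‖² + g(x) ≤ L₂ − L₃|x|², where L₂, L₃ > 0. Let θ ∈ (1/2, 1], α₁ ≥ 0, and τ ∈ (0,1) satisfy 2α₁ ≤ L₃ and 2α₁θ²τ ≤ 2θ − 1. Then for all x ∈ ℝ^d: |x + (1−θ)τ b(x)|² + τ(‖σ(x)‖² + g(x)) ≤ (1 − α₁τ)|x − θτ b(x)|² + L₂τ. -/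
open scoped RealInnerProductSpace

section ThetaScheme

variable {E : Type*} [NormedAddCommGroup E] [InnerProductSpace ℝ E]

lemma norm_add_smul_sq (x v : E) (c : ℝ) :
    ‖x + c • v‖ ^ 2 = ‖x‖ ^ 2 + 2 * c * ⟪x, v⟫ + c ^ 2 * ‖v‖ ^ 2 := by
  rw [norm_add_sq_real, real_inner_smul_right, norm_smul, Real.norm_eq_abs, mul_pow, sq_abs]
  ring

lemma norm_sub_sq_le_two_mul (x y : E) : ‖x - y‖ ^ 2 ≤ 2 * ‖x‖ ^ 2 + 2 * ‖y‖ ^ 2 := by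
  have := parallelogram_law_with_norm ℝ x y
  nlinarith [sq_nonneg ‖x + y‖]

/-- After one step of the `θ`-scheme the coercivity gain `L₃ ‖x‖²` and the numerical
dissipation `(2θ - 1) τ ‖v‖²` together pay for the contraction factor `1 - α τ`. -/
lemma norm_theta_step_sq_le {x v : E} {S L₂ L₃ θ α τ : ℝ}
    (hcoe : 2 * ⟪x, v⟫ + S ≤ L₂ - L₃ * ‖x‖ ^ 2) (hα : 0 ≤ α) (hτ : 0 ≤ τ)
    (h1 : 2 * α ≤ L₃) (h2 : 2 * α * θ ^ 2 * τ ≤ 2 * θ - 1) :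
    ‖x + ((1 - θ) * τ) • v‖ ^ 2 + τ * S ≤ (1 - α * τ) * ‖x - (θ * τ) • v‖ ^ 2 + L₂ * τ := by
  have himplicit : ‖x - (θ * τ) • v‖ ^ 2 = ‖x‖ ^ 2 - 2 * (θ * τ) * ⟪x, v⟫ + (θ * τ) ^ 2 * ‖v‖ ^ 2 := by
    rw [sub_eq_add_neg, ← neg_smul, norm_add_smul_sq]
    ring
  have hdissipation : α * ‖x - (θ * τ) • v‖ ^ 2 ≤ L₃ * ‖x‖ ^ 2 + (2 * θ - 1) * τ * ‖v‖ ^ 2 :=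
    calc α * ‖x - (θ * τ) • v‖ ^ 2
        ≤ α * (2 * ‖x‖ ^ 2 + 2 * ‖(θ * τ) • v‖ ^ 2) :=
          mul_le_mul_of_nonneg_left (norm_sub_sq_le_two_mul _ _) hα
      _ = 2 * α * ‖x‖ ^ 2 + 2 * α * θ ^ 2 * τ * (τ * ‖v‖ ^ 2) := by
          rw [norm_smul, Real.norm_eq_abs, mul_pow, sq_abs]
          ring
      _ ≤ L₃ * ‖x‖ ^ 2 + (2 * θ - 1) * (τ * ‖v‖ ^ 2) := by
          gcongr
      _ = L₃ * ‖x‖ ^ 2 + (2 * θ - 1) * τ * ‖v‖ ^ 2 := by ring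
  rw [norm_add_smul_sq]
  nlinarith [mul_le_mul_of_nonneg_left hcoe hτ, mul_le_mul_of_nonneg_left hdissipation hτ]

end ThetaScheme

theorem stmt_0_general (d m : ℕ)
    (b : EuclideanSpace ℝ (Fin d) → EuclideanSpace ℝ (Fin d))
    (σ : EuclideanSpace ℝ (Fin d) → EuclideanSpace ℝ (Fin d × Fin m))
    (g : EuclideanSpace ℝ (Fin d) → ℝ)
    (L₂ L₃ : ℝ)
    (hcoe : ∀ x, 2 * (inner ℝ x (b x) : ℝ) + ‖σ x‖ ^ 2 + g x ≤ L₂ - L₃ * ‖x‖ ^ 2)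
    (θ α₁ τ : ℝ) (hα : 0 ≤ α₁)
    (hτ : τ ∈ Set.Ioo (0 : ℝ) 1) (h1 : 2 * α₁ ≤ L₃)
    (h2 : 2 * α₁ * θ ^ 2 * τ ≤ 2 * θ - 1) :
    ∀ x : EuclideanSpace ℝ (Fin d),
      ‖x + ((1 - θ) * τ) • b x‖ ^ 2 + τ * (‖σ x‖ ^ 2 + g x)
        ≤ (1 - α₁ * τ) * ‖x - (θ * τ) • b x‖ ^ 2 + L₂ * τ := fun x =>
  norm_theta_step_sq_le (by rw [← add_assoc]; exact hcoe x) hα hτ.1.le h1 h2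

theorem stmt_0 (d m : ℕ) (hd : 0 < d) (hm : 0 < m)
    (b : EuclideanSpace ℝ (Fin d) → EuclideanSpace ℝ (Fin d))
    (σ : EuclideanSpace ℝ (Fin d) → EuclideanSpace ℝ (Fin d × Fin m))
    (g : EuclideanSpace ℝ (Fin d) → ℝ) (hg : ∀ x, 0 ≤ g x)
    (L₂ L₃ : ℝ) (hL₂ : 0 < L₂) (hL₃ : 0 < L₃)
    (hcoe : ∀ x, 2 * (inner ℝ x (b x) : ℝ) + ‖σ x‖ ^ 2 + g x ≤ L₂ - L₃ * ‖x‖ ^ 2)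
    (θ α₁ τ : ℝ) (hθ : θ ∈ Set.Ioc (1 / 2 : ℝ) 1) (hα : 0 ≤ α₁)
    (hτ : τ ∈ Set.Ioo (0 : ℝ) 1) (h1 : 2 * α₁ ≤ L₃)
    (h2 : 2 * α₁ * θ ^ 2 * τ ≤ 2 * θ - 1) :
    ∀ x : EuclideanSpace ℝ (Fin d),
      ‖x + ((1 - θ) * τ) • b x‖ ^ 2 + τ * (‖σ x‖ ^ 2 + g x)
        ≤ (1 - α₁ * τ) * ‖x - (θ * τ) • b x‖ ^ 2 + L₂ * τ :=
  stmt_0_general d m b σ g L₂ L₃ hcoe θ α₁ τ hα hτ h1 h2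
end

section
/- Let b : ℝ^d → ℝ^d, σ : ℝ^d → ℝ^(d×m), g : ℝ^d → ℝ nonnegative, and suppose 2⟨x, b(x)⟩ + ‖σ(x)‖² + g(x) ≤ L₂ − L₃|x|² for all x, with L₂, L₃ > 0. Let θ ∈ (1/2, 1] and τ ∈ (0,1). Define V_θ(x) := |x − θτ b(x)|². Then for all x ∈ ℝ^d: V_θ(x) ≥ (1 + θL₃τ)|x|² − L₂θτ. In particular V_θ(x) → ∞ as |x| → ∞. -/
open Filter

/-- Expanding `‖x - s • v‖²` and bounding the cross term by the one-sided bound on `2 ⟪x, v⟫`;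
the term `s² ‖v‖²` is simply dropped. -/
theorem le_norm_sub_smul_sq_of_two_inner_le {E : Type*} [NormedAddCommGroup E]
    [InnerProductSpace ℝ E] {x v : E} {s A B : ℝ} (hs : 0 ≤ s)
    (h : 2 * inner ℝ x v ≤ A - B * ‖x‖ ^ 2) :
    (1 + s * B) * ‖x‖ ^ 2 - s * A ≤ ‖x - s • v‖ ^ 2 := by
  have hexpand : ‖x - s • v‖ ^ 2 = ‖x‖ ^ 2 - s * (2 * inner ℝ x v) + s ^ 2 * ‖v‖ ^ 2 := by
    rw [norm_sub_sq_real, real_inner_smul_right, norm_smul, Real.norm_of_nonneg hs]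
    ring
  rw [hexpand]
  nlinarith [mul_le_mul_of_nonneg_left h hs, sq_nonneg (s * ‖v‖)]

theorem tendsto_comap_norm_atTop_of_quadratic_le {E : Type*} [Norm E] {f : E → ℝ} {c D : ℝ}
    (hc : 0 < c) (hf : ∀ x, c * ‖x‖ ^ 2 - D ≤ f x) :
    Tendsto f (comap (fun x => ‖x‖) atTop) atTop := by
  have hnorm : Tendsto (fun x : E => ‖x‖) (comap (fun x => ‖x‖) atTop) atTop := tendsto_comap
  have hsq : Tendsto (fun x : E => ‖x‖ ^ 2) (comap (fun x => ‖x‖) atTop) atTop :=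
    (tendsto_pow_atTop two_ne_zero).comp hnorm
  exact tendsto_atTop_mono hf (tendsto_atTop_add_const_right _ _ (hsq.const_mul_atTop hc))

theorem stmt_1_general (d m : ℕ)
    (b : EuclideanSpace ℝ (Fin d) → EuclideanSpace ℝ (Fin d))
    (σ : EuclideanSpace ℝ (Fin d) → EuclideanSpace ℝ (Fin d × Fin m))
    (g : EuclideanSpace ℝ (Fin d) → ℝ) (hg : ∀ x, 0 ≤ g x)
    (L₂ L₃ : ℝ) (hL₃ : 0 < L₃)
    (hcoe : ∀ x, 2 * (inner ℝ x (b x) : ℝ) + ‖σ x‖ ^ 2 + g x ≤ L₂ - L₃ * ‖x‖ ^ 2)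
    (θ τ : ℝ) (hθ : θ ∈ Set.Ioc (1 / 2 : ℝ) 1) (hτ : τ ∈ Set.Ioo (0 : ℝ) 1) :
    (∀ x : EuclideanSpace ℝ (Fin d),
      ‖x - (θ * τ) • b x‖ ^ 2 ≥ (1 + θ * L₃ * τ) * ‖x‖ ^ 2 - L₂ * θ * τ) ∧
    Filter.Tendsto (fun x : EuclideanSpace ℝ (Fin d) => ‖x - (θ * τ) • b x‖ ^ 2)
      (Filter.comap (fun x => ‖x‖) Filter.atTop) Filter.atTop := by
  have hstep : 0 < θ * τ := mul_pos (by linarith [hθ.1]) hτ.1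
  have hbound : ∀ x : EuclideanSpace ℝ (Fin d),
      ‖x - (θ * τ) • b x‖ ^ 2 ≥ (1 + θ * L₃ * τ) * ‖x‖ ^ 2 - L₂ * θ * τ := by
    intro x
    have hdrift : 2 * inner ℝ x (b x) ≤ L₂ - L₃ * ‖x‖ ^ 2 := by
      linarith [hcoe x, hg x, sq_nonneg ‖σ x‖]
    have := le_norm_sub_smul_sq_of_two_inner_le hstep.le hdrift
    linarith
  have hcoef : 0 < 1 + θ * L₃ * τ := by nlinarith [mul_pos hstep hL₃]
  exact ⟨hbound, tendsto_comap_norm_atTop_of_quadratic_le hcoef hbound⟩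

theorem stmt_1 (d m : ℕ)
    (b : EuclideanSpace ℝ (Fin d) → EuclideanSpace ℝ (Fin d))
    (σ : EuclideanSpace ℝ (Fin d) → EuclideanSpace ℝ (Fin d × Fin m))
    (g : EuclideanSpace ℝ (Fin d) → ℝ) (hg : ∀ x, 0 ≤ g x)
    (L₂ L₃ : ℝ) (hL₂ : 0 < L₂) (hL₃ : 0 < L₃)
    (hcoe : ∀ x, 2 * (inner ℝ x (b x) : ℝ) + ‖σ x‖ ^ 2 + g x ≤ L₂ - L₃ * ‖x‖ ^ 2)
    (θ τ : ℝ) (hθ : θ ∈ Set.Ioc (1 / 2 : ℝ) 1) (hτ : τ ∈ Set.Ioo (0 : ℝ) 1) :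
    (∀ x : EuclideanSpace ℝ (Fin d),
      ‖x - (θ * τ) • b x‖ ^ 2 ≥ (1 + θ * L₃ * τ) * ‖x‖ ^ 2 - L₂ * θ * τ) ∧
    Filter.Tendsto (fun x : EuclideanSpace ℝ (Fin d) => ‖x - (θ * τ) • b x‖ ^ 2)
      (Filter.comap (fun x => ‖x‖) Filter.atTop) Filter.atTop :=
  stmt_1_general d m b σ g hg L₂ L₃ hL₃ hcoe θ τ hθ hτ
end

section
/- Let E, B ∈ ℝ^d, θ ∈ (1/2, 1], L₁* > 0, τ ∈ (0,1) with L₁*θ²τ ≤ 3 − 2θ, and suppose 2⟨E, B⟩ + s + c ≤ −L₁*|E|² for some s, c ≥ 0. Then |E − θτ B|² + (1 − 2θ)τ²|B|² + τ(2⟨E, B⟩ + s + c) ≤ (1 − (θ − 1/2)L₁*τ)|E − θτ B|². -/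
/-! Once the dissipativity bound replaces `τ (2⟨E, B⟩ + s + c)` by `-L₁' τ ‖E‖²`, the claim becomes
the nonpositivity of a quadratic form in `(E, B)`. Completing the square in `E` leaves a
positive multiple of `(L₁' θ² τ - (3 - 2θ)) ‖B‖²`, which is nonpositive by the step-size
restriction. -/

section

variable {F : Type*} [NormedAddCommGroup F] [InnerProductSpace ℝ F]

lemma sq_mul_norm_sq_add_inner_add_sq_mul_norm_sq_nonneg (x y : F) (a b : ℝ) :
    0 ≤ a ^ 2 * ‖x‖ ^ 2 + 2 * a * b * inner ℝ x y + b ^ 2 * ‖y‖ ^ 2 := by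
  have h := sq_nonneg ‖a • x + b • y‖
  rw [norm_add_sq_real, real_inner_smul_left, real_inner_smul_right, norm_smul, norm_smul,
    mul_pow, mul_pow, Real.norm_eq_abs, Real.norm_eq_abs, sq_abs, sq_abs] at h
  linarith

lemma norm_sub_smul_sq_real (x y : F) (t : ℝ) :
    ‖x - t • y‖ ^ 2 = ‖x‖ ^ 2 - 2 * t * inner ℝ x y + t ^ 2 * ‖y‖ ^ 2 := by
  rw [norm_sub_sq_real, real_inner_smul_right, norm_smul, mul_pow, Real.norm_eq_abs, sq_abs]
  ring

lemma theta_step_norm_sq_le {L θ τ : ℝ} (x y : F) (hL : 0 ≤ L) (hθ : 1 / 2 ≤ θ)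
    (hθ' : θ < 3 / 2) (hτ : 0 ≤ τ) (hsmall : L * θ ^ 2 * τ ≤ 3 - 2 * θ) :
    (θ - 1 / 2) * L * ‖x - (θ * τ) • y‖ ^ 2 + (1 - 2 * θ) * τ * ‖y‖ ^ 2 ≤ L * ‖x‖ ^ 2 := by
  set Q := (3 - 2 * θ) ^ 2 * ‖x‖ ^ 2 + 2 * (3 - 2 * θ) * ((2 * θ - 1) * θ * τ) * inner ℝ x y
    + ((2 * θ - 1) * θ * τ) ^ 2 * ‖y‖ ^ 2
  have hQ : 0 ≤ Q := sq_mul_norm_sq_add_inner_add_sq_mul_norm_sq_nonneg x y _ _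
  have hgap : 0 ≤ 2 * (2 * θ - 1) * τ * ((3 - 2 * θ) - L * θ ^ 2 * τ) * ‖y‖ ^ 2 := by
    have : 0 ≤ 2 * θ - 1 := by linarith
    have : 0 ≤ (3 - 2 * θ) - L * θ ^ 2 * τ := by linarith
    positivity
  have hsquare : 2 * (3 - 2 * θ) * (L * ‖x‖ ^ 2
      - ((θ - 1 / 2) * L * ‖x - (θ * τ) • y‖ ^ 2 + (1 - 2 * θ) * τ * ‖y‖ ^ 2))
      = L * Q + 2 * (2 * θ - 1) * τ * ((3 - 2 * θ) - L * θ ^ 2 * τ) * ‖y‖ ^ 2 := by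
    rw [norm_sub_smul_sq_real]
    ring
  have hpos : 0 < 2 * (3 - 2 * θ) := by linarith
  have hdiff := (mul_nonneg_iff_of_pos_left hpos).mp (hsquare ▸ add_nonneg (mul_nonneg hL hQ) hgap)
  linarith

end

theorem stmt_3_general (d : ℕ) (E B : EuclideanSpace ℝ (Fin d))
    (s c L₁' θ τ : ℝ) (hL : 0 < L₁')
    (hθ : θ ∈ Set.Ioc (1 / 2 : ℝ) 1) (hτ : τ ∈ Set.Ioo (0 : ℝ) 1)
    (hsmall : L₁' * θ ^ 2 * τ ≤ 3 - 2 * θ)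
    (hdis : 2 * (inner ℝ E B : ℝ) + s + c ≤ -L₁' * ‖E‖ ^ 2) :
    ‖E - (θ * τ) • B‖ ^ 2 + (1 - 2 * θ) * τ ^ 2 * ‖B‖ ^ 2
        + τ * (2 * (inner ℝ E B : ℝ) + s + c)
      ≤ (1 - (θ - 1 / 2) * L₁' * τ) * ‖E - (θ * τ) • B‖ ^ 2 := by
  obtain ⟨hθ₁, hθ₂⟩ := hθ
  have hform := theta_step_norm_sq_le E B hL.le hθ₁.le (by linarith) hτ.1.le hsmall
  have hdis_τ := mul_le_mul_of_nonneg_left hdis hτ.1.le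
  have hform_τ := mul_le_mul_of_nonneg_left hform hτ.1.le
  linarith

theorem stmt_3 (d : ℕ) (E B : EuclideanSpace ℝ (Fin d))
    (s c L₁' θ τ : ℝ) (hs : 0 ≤ s) (hc : 0 ≤ c) (hL : 0 < L₁')
    (hθ : θ ∈ Set.Ioc (1 / 2 : ℝ) 1) (hτ : τ ∈ Set.Ioo (0 : ℝ) 1)
    (hsmall : L₁' * θ ^ 2 * τ ≤ 3 - 2 * θ)
    (hdis : 2 * (inner ℝ E B : ℝ) + s + c ≤ -L₁' * ‖E‖ ^ 2) :
    ‖E - (θ * τ) • B‖ ^ 2 + (1 - 2 * θ) * τ ^ 2 * ‖B‖ ^ 2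
        + τ * (2 * (inner ℝ E B : ℝ) + s + c)
      ≤ (1 - (θ - 1 / 2) * L₁' * τ) * ‖E - (θ * τ) • B‖ ^ 2 :=
  stmt_3_general d E B s c L₁' θ τ hL hθ hτ hsmall hdis
end

section
/- Let m : [h, ∞) → [0, ∞) and n : [h, ∞) → [0, ∞) be nonnegative continuous functions, h ∈ ℝ, and c > 0. If m(t) − m(s) ≤ −c ∫_s^t m(u) du + ∫_s^t n(u) du for all h ≤ s ≤ t < ∞, then m(t) ≤ m(h) + ∫_h^t e^{−c(t−u)} n(u) du for all t ≥ h. -/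
/-!
With `M`, `N` the primitives of `m`, `n` from `h`, the hypothesis says exactly that
`F = m + c M - N` is antitone. Since `m = F - G` with `G = c M - N` and `G' + c G = c F - n`,
the integrating factor `e^{cu}` gives
`e^{ch} F(t) - e^{ct} m(t) = ∫_h^t e^{cu} (c (F(u) - F(t)) - n(u)) du`, which is at least
`-∫_h^t e^{cu} n(u) du` because `F(u) ≥ F(t)`.
Hence `e^{ct} m(t) ≤ e^{ch} F(t) + ∫_h^t e^{cu} n ≤ e^{ct} m(h) + ∫_h^t e^{cu} n`,
using `F(t) ≤ F(h) = m(h)` and `m(h) ≥ 0`.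
-/

open intervalIntegral MeasureTheory Set Real

section

variable {f g G m n : ℝ → ℝ} {a b c u : ℝ}

theorem hasDerivAt_integral_of_continuousOn (hf : ContinuousOn f (Icc a b)) (hu : u ∈ Ioo a b) :
    HasDerivAt (fun x => ∫ v in a..x, f v) (f u) u :=
  integral_hasDerivAt_right
    ((hf.mono (Icc_subset_Icc_right hu.2.le)).intervalIntegrable_of_Icc hu.1.le)
    ((hf.mono Ioo_subset_Icc_self).stronglyMeasurableAtFilter isOpen_Ioo u hu)
    (hf.continuousAt (Icc_mem_nhds hu.1 hu.2))

theorem continuousOn_integral_of_continuousOn (hab : a ≤ b) (hf : ContinuousOn f (Icc a b)) :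
    ContinuousOn (fun x => ∫ v in a..x, f v) (Icc a b) := by
  rw [← uIcc_of_le hab] at hf ⊢
  exact continuousOn_primitive_interval hf.integrableOn_uIcc

theorem integral_exp_mul_mul_deriv_add (hab : a ≤ b) (hG : ContinuousOn G (Icc a b))
    (hG' : ∀ u ∈ Ioo a b, HasDerivAt G (g u) u) (hg : ContinuousOn g (Icc a b)) :
    ∫ u in a..b, exp (c * u) * (g u + c * G u) = exp (c * b) * G b - exp (c * a) * G a := by
  have hexp : Continuous fun u => exp (c * u) := by fun_prop
  refine integral_eq_sub_of_hasDeriv_right_of_le hab (hexp.continuousOn.mul hG) (fun u hu => ?_)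
    ((hexp.continuousOn.mul (hg.add (hG.const_smul c))).intervalIntegrable_of_Icc hab)
  have hexp' : HasDerivAt (fun x => exp (c * x)) (exp (c * u) * c) u := by
    simpa using ((hasDerivAt_id u).const_mul c).exp
  exact ((hexp'.mul (hG' u hu)).congr_deriv (by ring)).hasDerivWithinAt

theorem antitoneOn_of_integral_ineq (hm : ContinuousOn m (Icc a b)) (hn : ContinuousOn n (Icc a b))
    (hineq : ∀ s t, a ≤ s → s ≤ t → t ≤ b →
      m t - m s ≤ -c * (∫ u in s..t, m u) + ∫ u in s..t, n u) :
    AntitoneOn (fun s => m s + c * (∫ u in a..s, m u) - ∫ u in a..s, n u) (Icc a b) := by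
  intro s hs t ht hst
  have hint : ∀ {f : ℝ → ℝ}, ContinuousOn f (Icc a b) → ∀ x ∈ Icc a b,
      IntervalIntegrable f volume a x :=
    fun hf x hx => (hf.mono (Icc_subset_Icc_right hx.2)).intervalIntegrable_of_Icc hx.1
  have := hineq s t hs.1 hst ht.2
  rw [← integral_interval_sub_left (hint hm t ht) (hint hm s hs),
    ← integral_interval_sub_left (hint hn t ht) (hint hn s hs)] at this
  dsimp only
  linarith

theorem exp_mul_le_of_antitoneOn (hab : a ≤ b) (hc : 0 ≤ c) (hm : ContinuousOn m (Icc a b))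
    (hn : ContinuousOn n (Icc a b))
    (hF : AntitoneOn (fun s => m s + c * (∫ u in a..s, m u) - ∫ u in a..s, n u) (Icc a b)) :
    exp (c * b) * m b ≤ exp (c * a) * m a + ∫ u in a..b, exp (c * u) * n u := by
  set M := fun x => ∫ u in a..x, m u
  set N := fun x => ∫ u in a..x, n u
  set F := fun s => m s + c * M s - N s
  replace hF : AntitoneOn F (Icc a b) := hF
  have hMc := continuousOn_integral_of_continuousOn hab hm
  have hNc := continuousOn_integral_of_continuousOn hab hn
  have hFc : ContinuousOn F (Icc a b) := (hm.add (hMc.const_smul c)).sub hNc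
  have ha : a ∈ Icc a b := left_mem_Icc.2 hab
  have hb : b ∈ Icc a b := right_mem_Icc.2 hab
  -- the integrating factor applied to `c M - N - F b`, whose derivative is `c m - n`
  have hident : ∫ u in a..b, exp (c * u) * (c * (F u - F b) - n u)
      = exp (c * a) * F b - exp (c * b) * m b := by
    have := integral_exp_mul_mul_deriv_add (c := c) (g := fun u => c * m u - n u)
      (G := fun u => c * M u - N u - F b) hab (((hMc.const_smul c).sub hNc).sub continuousOn_const)
      (fun u hu => (((hasDerivAt_integral_of_continuousOn hm hu).const_mul c).sub
        (hasDerivAt_integral_of_continuousOn hn hu)).sub_const _)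
      ((hm.const_smul c).sub hn)
    simp only [M, N, F, integral_same] at this ⊢
    convert this using 1
    · congr 1; ext u; ring
    · ring
  have hlower : -∫ u in a..b, exp (c * u) * n u
      ≤ ∫ u in a..b, exp (c * u) * (c * (F u - F b) - n u) := by
    have hexp : ContinuousOn (fun u => exp (c * u)) (Icc a b) := by fun_prop
    rw [← intervalIntegral.integral_neg]
    refine integral_mono_on hab ((hexp.mul hn).neg.intervalIntegrable_of_Icc hab)
      ((hexp.mul (((hFc.sub continuousOn_const).const_smul c).sub hn)).intervalIntegrable_of_Icc
        hab) fun u hu => ?_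
    have : 0 ≤ exp (c * u) * (c * (F u - F b)) :=
      mul_nonneg (exp_nonneg _) (mul_nonneg hc (sub_nonneg.2 (hF hu hb hu.2)))
    linarith [mul_sub (exp (c * u)) (c * (F u - F b)) (n u)]
  have hFb : F b ≤ m a := by simpa [F, M, N] using hF ha hb hab
  linarith [mul_le_mul_of_nonneg_left hFb (exp_nonneg (c * a))]

end

theorem stmt_6_general (h : ℝ) (m n : ℝ → ℝ) (c : ℝ) (hc : 0 < c)
    (hmcont : ContinuousOn m (Set.Ici h)) (hncont : ContinuousOn n (Set.Ici h))
    (hm0 : ∀ t, h ≤ t → 0 ≤ m t)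
    (hineq : ∀ s t, h ≤ s → s ≤ t →
      m t - m s ≤ -c * (∫ u in s..t, m u) + ∫ u in s..t, n u) :
    ∀ t, h ≤ t → m t ≤ m h + ∫ u in h..t, Real.exp (-c * (t - u)) * n u := by
  intro t ht
  have hm : ContinuousOn m (Icc h t) := hmcont.mono Icc_subset_Ici_self
  have hn : ContinuousOn n (Icc h t) := hncont.mono Icc_subset_Ici_self
  have key := exp_mul_le_of_antitoneOn ht hc.le hm hn
    (antitoneOn_of_integral_ineq hm hn fun s u hs hsu _ => hineq s u hs hsu)
  have hgrowth : exp (c * h) * m h ≤ exp (c * t) * m h :=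
    mul_le_mul_of_nonneg_right (exp_le_exp.2 (by nlinarith)) (hm0 h le_rfl)
  have hweight : exp (c * t) * ∫ u in h..t, exp (-c * (t - u)) * n u
      = ∫ u in h..t, exp (c * u) * n u := by
    rw [← intervalIntegral.integral_const_mul]
    congr 1 with u
    rw [← mul_assoc, ← exp_add]
    ring_nf
  rw [← mul_le_mul_iff_right₀ (exp_pos (c * t)), mul_add, hweight]
  linarith

theorem stmt_6 (h : ℝ) (m n : ℝ → ℝ) (c : ℝ) (hc : 0 < c)
    (hmcont : ContinuousOn m (Set.Ici h)) (hncont : ContinuousOn n (Set.Ici h))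
    (hm0 : ∀ t, h ≤ t → 0 ≤ m t) (hn0 : ∀ t, h ≤ t → 0 ≤ n t)
    (hineq : ∀ s t, h ≤ s → s ≤ t →
      m t - m s ≤ -c * (∫ u in s..t, m u) + ∫ u in s..t, n u) :
    ∀ t, h ≤ t → m t ≤ m h + ∫ u in h..t, Real.exp (-c * (t - u)) * n u :=
  stmt_6_general h m n c hc hmcont hncont hm0 hineq
end

section
/- Let x, w ∈ ℝ^d, τ > 0, L₈ ≥ 0, L₉ > 0, and let b : ℝ^d → ℝ^d satisfy ⟨y, b(y)⟩ ≤ L₈ − L₉|y|² for all y. Suppose y ∈ ℝ^d satisfies the implicit relation y = x + τ b(y) + w. Then (1 + 2L₉τ)|y|² ≤ 2L₈τ + |x + w|². -/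
open scoped RealInnerProductSpace

/-- The identity `2 ⟪y - v, y⟫ = ‖y‖² - ‖v‖² + ‖y - v‖²` with the last term dropped. -/
theorem norm_sq_le_of_eq_add_smul {E : Type*} [NormedAddCommGroup E] [InnerProductSpace ℝ E]
    {y v u : E} {τ : ℝ} (h : y = v + τ • u) :
    ‖y‖ ^ 2 ≤ ‖v‖ ^ 2 + 2 * τ * ⟪y, u⟫ := by
  have hyy : ‖y‖ ^ 2 = ⟪y, v⟫ + τ * ⟪y, u⟫ := by
    rw [← real_inner_self_eq_norm_sq]
    nth_rewrite 2 [h]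
    rw [inner_add_right, real_inner_smul_right]
  have hsub : ‖y - v‖ ^ 2 = ‖y‖ ^ 2 - 2 * ⟪y, v⟫ + ‖v‖ ^ 2 := norm_sub_sq_real y v
  linarith [sq_nonneg ‖y - v‖]

theorem stmt_9_general (d : ℕ) (x w y : EuclideanSpace ℝ (Fin d))
    (τ L₈ L₉ : ℝ) (hτ : 0 < τ)
    (b : EuclideanSpace ℝ (Fin d) → EuclideanSpace ℝ (Fin d))
    (hcoe : ∀ z, (inner ℝ z (b z) : ℝ) ≤ L₈ - L₉ * ‖z‖ ^ 2)
    (himp : y = x + τ • b y + w) :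
    (1 + 2 * L₉ * τ) * ‖y‖ ^ 2 ≤ 2 * L₈ * τ + ‖x + w‖ ^ 2 := by
  have hstep := norm_sq_le_of_eq_add_smul (himp.trans (add_right_comm x (τ • b y) w))
  linarith [mul_le_mul_of_nonneg_left (hcoe y) hτ.le]

theorem stmt_9 (d : ℕ) (x w y : EuclideanSpace ℝ (Fin d))
    (τ L₈ L₉ : ℝ) (hτ : 0 < τ) (hL₈ : 0 ≤ L₈) (hL₉ : 0 < L₉)
    (b : EuclideanSpace ℝ (Fin d) → EuclideanSpace ℝ (Fin d))
    (hcoe : ∀ z, (inner ℝ z (b z) : ℝ) ≤ L₈ - L₉ * ‖z‖ ^ 2)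
    (himp : y = x + τ • b y + w) :
    (1 + 2 * L₉ * τ) * ‖y‖ ^ 2 ≤ 2 * L₈ * τ + ‖x + w‖ ^ 2 :=
  stmt_9_general d x w y τ L₈ L₉ hτ b hcoe himp
end
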